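/- arXiv:1711.02411 — 3 statements merged into one kernel-verified Lean document; each statement's English description precedes it below -/
import Mathlib

section
/- Let F = Sur_1(n,k) be the set of surjective functions from [n] to [k], with whirl maps w_i and w = w_n ∘ ⋯ ∘ w_1. Then for every w-orbit O and every j ∈ [k], the average over f in O of #{i ∈ [n] : f(i) = j} equals n/k. -/
open Finset

open scoped Classical

open Fin.NatCast in
noncomputable def whirl {n k : ℕ} [NeZero k] (F : Set (Fin n → Fin k)) (i : Fin n)
    (f : Fin n → Fin k) : Fin n → Fin k :=
  if h : ∃ t : ℕ, 0 < t ∧ Function.update f i (f i + (t : Fin k)) ∈ F then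
    Function.update f i (f i + ((Nat.find h : ℕ) : Fin k))
  else f

noncomputable def whirlAll {n k : ℕ} [NeZero k] (F : Set (Fin n → Fin k))
    (f : Fin n → Fin k) : Fin n → Fin k :=
  (List.finRange n).foldl (fun g i => whirl F i g) f

noncomputable def orbitOf {α : Type*} [Fintype α] [DecidableEq α] (w : α → α) (f : α) :
    Finset α :=
  Finset.univ.filter fun g => ∃ m : ℕ, w^[m] f = g


/-!
On surjections each single whirl can be undone, so the orbit of `f` is a cycle. Unroll `w` into
single whirls, the `s`-th one acting on entry `s mod n`, and over a period of
`N = m n` steps count the steps whose entry holds `v`. This count is `m` times the orbit average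
of `#f⁻¹(v)`, and its values sum to `N`, so it suffices that it is nondecreasing in
`v ∈ ℤ/k`. A step either advances its entry from `v` to `v + 1`, or is frozen because the entry
is the only preimage of `v`. Since the fiber over `v + 1` returns to its initial size, advancing
steps at `v` and at `v + 1` are equally many. A frozen step at `v` is followed within `n` steps
by a frozen step at `v + 1`, and frozen steps at `v` are at least `n` apart (cyclically), which
makes this an injection.
-/

open Function

theorem Set.InjOn.mem_periodicPts {α : Type*} [Finite α] {w : α → α} {s : Set α}
    (hmaps : Set.MapsTo w s s) (hinj : Set.InjOn w s) {x : α} (hx : x ∈ s) :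
    x ∈ periodicPts w :=
  Semiconj.mapsTo_periodicPts (g := Subtype.val) (fa := hmaps.restrict w s s) (fun _ => rfl)
    ((hmaps.restrict_inj.2 hinj).mem_periodicPts ⟨x, hx⟩)

section orbitOf

variable {α M : Type*} [Fintype α] [DecidableEq α] [AddCommMonoid M] {w : α → α} {x : α}

theorem orbitOf_eq_image (hx : x ∈ periodicPts w) :
    orbitOf w x = (range (minimalPeriod w x)).image (w^[·] x) := by
  ext g
  simp only [orbitOf, mem_filter, mem_univ, true_and, mem_image, mem_range]
  constructor
  · rintro ⟨t, rfl⟩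
    exact ⟨t % minimalPeriod w x, Nat.mod_lt _ (minimalPeriod_pos_of_mem_periodicPts hx),
      iterate_mod_minimalPeriod_eq⟩
  · rintro ⟨t, -, rfl⟩
    exact ⟨t, rfl⟩

theorem card_orbitOf (hx : x ∈ periodicPts w) : #(orbitOf w x) = minimalPeriod w x := by
  rw [orbitOf_eq_image hx, card_image_of_injOn (by simpa using iterate_injOn_Iio_minimalPeriod),
    card_range]

theorem sum_orbitOf (hx : x ∈ periodicPts w) (φ : α → M) :
    ∑ g ∈ orbitOf w x, φ g = ∑ t ∈ range (minimalPeriod w x), φ (w^[t] x) := by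
  rw [orbitOf_eq_image hx, sum_image (by simpa using iterate_injOn_Iio_minimalPeriod)]

end orbitOf

theorem Nat.not_modEq_of_lt_of_lt_add {m u u' : ℕ} (h : u < u') (h' : u' < u + m) :
    ¬u ≡ u' [MOD m] := by
  intro huu'
  obtain ⟨d, rfl⟩ := Nat.exists_eq_add_of_le h.le
  have hd : d ≡ 0 [MOD m] := Nat.ModEq.add_left_cancel' u (huu'.symm : u + d ≡ u + 0 [MOD m])
  have := hd.eq_of_lt_of_lt (by omega) (by omega)
  omega

theorem Finset.card_filter_update_add {ι β : Type*} [Fintype ι] [DecidableEq ι] [DecidableEq β]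
    (g : ι → β) (i : ι) (b c : β) :
    #{p | update g i b p = c} + (if g i = c then 1 else 0) =
      #{p | g p = c} + (if b = c then 1 else 0) := by
  simp only [card_filter]
  rw [← add_sum_erase _ _ (mem_univ i), ← add_sum_erase _ _ (mem_univ i),
    sum_congr rfl fun p hp => by rw [update_of_ne (ne_of_mem_erase hp)], update_self]
  omega

open Fin.NatCast

namespace Fin

variable {k : ℕ} [NeZero k]

theorem add_one_ne_self (hk : 1 < k) (v : Fin k) : v + 1 ≠ v := by
  rw [Ne, add_eq_left, one_eq_zero_iff]
  omega

theorem eq_of_forall_le_add_one {g : Fin k → ℕ} (h : ∀ v, g v ≤ g (v + 1)) (v w : Fin k) :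
    g v = g w := by
  have hstep (v : Fin k) : g v = g (v + 1) :=
    (sum_eq_sum_iff_of_le fun v _ => h v).1 (Equiv.sum_comp (Equiv.addRight 1) g).symm v
      (mem_univ v)
  have hshift (t : ℕ) : g v = g (v + t) := by
    induction t with
    | zero => simp
    | succ t ih => rw [ih, hstep, Nat.cast_succ, add_assoc]
  simpa using hshift (w - v).val

variable {n : ℕ} [NeZero n]

theorem natCast_add_of_dvd {N : ℕ} (hN : n ∣ N) (s : ℕ) : ((s + N : ℕ) : Fin n) = s := by
  rw [Nat.cast_add, (CharP.cast_eq_zero_iff (Fin n) n N).2 hN, add_zero]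

theorem natCast_mod_of_dvd {N : ℕ} (hN : n ∣ N) (s : ℕ) : ((s % N : ℕ) : Fin n) = s := by
  rw [CharP.natCast_eq_natCast (Fin n) n]
  exact Nat.mod_mod_of_dvd s hN

theorem natCast_ne_of_lt_of_lt_add {u u' : ℕ} (h : u < u') (h' : u' < u + n) :
    (u : Fin n) ≠ u' := by
  rw [Ne, CharP.natCast_eq_natCast (Fin n) n]
  exact Nat.not_modEq_of_lt_of_lt_add h h'

theorem exists_lt_natCast_add_eq (s : ℕ) (p : Fin n) : ∃ d < n, ((s + d : ℕ) : Fin n) = p :=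
  ⟨(p - s).val, (p - s).isLt, by simp⟩

end Fin

namespace Whirl

variable {n k : ℕ} [NeZero k]

/-- `whirl` at `i` on surjections: advancing `g i` by one keeps `g` surjective iff `g i` has
another preimage; otherwise only a full turn does. -/
def step (i : Fin n) (g : Fin n → Fin k) : Fin n → Fin k :=
  if ∀ p ≠ i, g p ≠ g i then g else update g i (g i + 1)

def unstep (i : Fin n) (g : Fin n → Fin k) : Fin n → Fin k :=
  if ∀ p ≠ i, g p ≠ g i then g else update g i (g i - 1)

theorem step_of_forall_ne {i : Fin n} {g : Fin n → Fin k} (h : ∀ p ≠ i, g p ≠ g i) :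
    step i g = g :=
  if_pos h

theorem step_of_not_forall_ne {i : Fin n} {g : Fin n → Fin k} (h : ¬∀ p ≠ i, g p ≠ g i) :
    step i g = update g i (g i + 1) :=
  if_neg h

theorem step_apply_of_ne {i p : Fin n} (h : p ≠ i) (g : Fin n → Fin k) : step i g p = g p := by
  unfold step
  split_ifs <;> simp [h]

theorem surjective_update_add_one {i : Fin n} {g : Fin n → Fin k} (hg : Surjective g)
    (h : ¬∀ p ≠ i, g p ≠ g i) : Surjective (update g i (g i + 1)) := by
  push Not at h
  obtain ⟨p, hpi, hp⟩ := h
  intro v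
  obtain ⟨q, rfl⟩ := hg v
  by_cases hv : g q = g i + 1
  · exact ⟨i, by simp [hv]⟩
  by_cases hqi : q = i
  · exact ⟨p, by simp [hpi, hp, hqi]⟩
  · exact ⟨q, by simp [hqi]⟩

theorem step_surjective {i : Fin n} {g : Fin n → Fin k} (hg : Surjective g) :
    Surjective (step i g) := by
  unfold step
  split_ifs with h
  · exact hg
  · exact surjective_update_add_one hg h

theorem whirl_eq_update_of_forall_lt {F : Set (Fin n → Fin k)} {i : Fin n} {g : Fin n → Fin k}
    {t : ℕ} (ht : 0 < t ∧ update g i (g i + (t : Fin k)) ∈ F)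
    (hmin : ∀ s < t, ¬(0 < s ∧ update g i (g i + (s : Fin k)) ∈ F)) :
    whirl F i g = update g i (g i + (t : Fin k)) := by
  rw [whirl, dif_pos ⟨t, ht⟩, (Nat.find_eq_iff _).2 ⟨ht, hmin⟩]

theorem whirl_eq_step {i : Fin n} {g : Fin n → Fin k} (hg : Surjective g) :
    whirl {h | Surjective h} i g = step i g := by
  by_cases hlone : ∀ p ≠ i, g p ≠ g i
  · -- for `0 < s < k` the value `g i` loses its only preimage
    have hmin (s : ℕ) (hs : s < k) :
        ¬(0 < s ∧ Surjective (update g i (g i + (s : Fin k)))) := by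
      rintro ⟨hs0, hsurj⟩
      obtain ⟨q, hq⟩ := hsurj (g i)
      by_cases hqi : q = i
      · rw [hqi, update_self, add_eq_left, Fin.natCast_eq_zero] at hq
        exact hs0.ne' (Nat.eq_zero_of_dvd_of_lt hq hs)
      · exact hlone q hqi (by simpa [hqi] using hq)
    rw [whirl_eq_update_of_forall_lt (t := k) ⟨Nat.pos_of_neZero k, by simpa using hg⟩ hmin,
      step_of_forall_ne hlone]
    simp
  · rw [whirl_eq_update_of_forall_lt (t := 1)
      ⟨one_pos, by simpa using surjective_update_add_one hg hlone⟩ (fun s hs h => by omega),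
      step_of_not_forall_ne hlone]
    simp

theorem unstep_step (hk : 1 < k) {i : Fin n} {g : Fin n → Fin k} (hg : Surjective g) :
    unstep i (step i g) = g := by
  by_cases hlone : ∀ p ≠ i, g p ≠ g i
  · rw [step_of_forall_ne hlone, unstep, if_pos hlone]
  · obtain ⟨q, hq⟩ := hg (g i + 1)
    have hqi : q ≠ i := by
      rintro rfl
      exact Fin.add_one_ne_self hk _ hq.symm
    have hmoved : ¬∀ p ≠ i, update g i (g i + 1) p ≠ update g i (g i + 1) i :=
      fun h => h q hqi (by simp [hqi, hq])
    rw [step_of_not_forall_ne hlone, unstep, if_neg hmoved]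
    simp

theorem step_injOn (hk : 1 < k) (i : Fin n) :
    Set.InjOn (step i) {g : Fin n → Fin k | Surjective g} :=
  Set.LeftInvOn.injOn (f₁' := unstep i) fun _ hg => unstep_step hk hg

theorem foldl_whirl_eq_foldl_step (l : List (Fin n)) {g : Fin n → Fin k} (hg : Surjective g) :
    l.foldl (fun g i => whirl {h | Surjective h} i g) g = l.foldl (fun g i => step i g) g := by
  induction l generalizing g with
  | nil => rfl
  | cons i l ih => simp only [List.foldl_cons, whirl_eq_step hg, ih (step_surjective hg)]

variable [NeZero n]

/-- The single whirls `w_1, w_2, …, w_n, w_1, …` applied in turn, so that `w^[t] f` is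
`trajectory f (t * n)`. -/
def trajectory (f : Fin n → Fin k) : ℕ → Fin n → Fin k
  | 0 => f
  | s + 1 => step (s : Fin n) (trajectory f s)

variable {f : Fin n → Fin k}

theorem trajectory_surjective (hf : Surjective f) (s : ℕ) : Surjective (trajectory f s) := by
  induction s with
  | zero => exact hf
  | succ s ih => exact step_surjective ih

theorem trajectory_add (f : Fin n → Fin k) (s r : ℕ) :
    trajectory f (s + r) =
      (List.range r).foldl (fun g j => step ((s + j : ℕ) : Fin n) g) (trajectory f s) := by
  induction r with
  | zero => rfl
  | succ r ih => rw [← add_assoc, trajectory, ih, List.range_succ, List.foldl_append]; rfl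

theorem whirlAll_trajectory (hf : Surjective f) {s : ℕ} (hs : n ∣ s) :
    whirlAll {h | Surjective h} (trajectory f s) = trajectory f (s + n) := by
  rw [whirlAll, foldl_whirl_eq_foldl_step _ (trajectory_surjective hf s), trajectory_add,
    ← List.map_coe_finRange_eq_range, List.foldl_map]
  simp_rw [add_comm s, Fin.natCast_add_of_dvd hs, Fin.cast_val_eq_self]

theorem whirlAll_eq_trajectory (hf : Surjective f) :
    whirlAll {h | Surjective h} f = trajectory f n :=
  (whirlAll_trajectory hf (dvd_zero n)).trans (by rw [zero_add])

theorem iterate_whirlAll (hf : Surjective f) (t : ℕ) :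
    (whirlAll {h | Surjective h})^[t] f = trajectory f (t * n) := by
  induction t with
  | zero => rw [zero_mul]; rfl
  | succ t ih =>
    rw [iterate_succ_apply', ih, whirlAll_trajectory hf (dvd_mul_left n t), add_one_mul]

theorem trajectory_injOn (hk : 1 < k) (s : ℕ) :
    Set.InjOn (trajectory · s) {g : Fin n → Fin k | Surjective g} := by
  induction s with
  | zero => exact fun _ _ _ _ h => h
  | succ s ih =>
    exact fun g hg g' hg' h => ih hg hg' <| step_injOn hk _
      (trajectory_surjective hg s) (trajectory_surjective hg' s) h

theorem mem_periodicPts_whirlAll (hf : Surjective f) :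
    f ∈ periodicPts (whirlAll {h : Fin n → Fin k | Surjective h}) := by
  obtain rfl | hk := (Nat.one_le_iff_ne_zero.2 (NeZero.ne k)).eq_or_lt
  · exact mk_mem_periodicPts one_pos (Subsingleton.elim _ _)
  refine Set.InjOn.mem_periodicPts (s := {g | Surjective g}) (fun g hg => ?_)
    (fun g hg g' hg' h => ?_) hf
  · rw [Set.mem_ofPred_eq, whirlAll_eq_trajectory hg]
    exact trajectory_surjective hg n
  · rw [whirlAll_eq_trajectory hg, whirlAll_eq_trajectory hg'] at h
    exact trajectory_injOn hk n hg hg' h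

theorem trajectory_apply_of_forall_ne {s t : ℕ} {p : Fin n} (hst : s ≤ t)
    (hp : ∀ u, s ≤ u → u < t → (u : Fin n) ≠ p) :
    trajectory f t p = trajectory f s p := by
  induction t, hst using Nat.le_induction with
  | base => rfl
  | succ t hst ih =>
    rw [trajectory, step_apply_of_ne (hp t hst t.lt_succ_self).symm,
      ih fun u hsu hut => hp u hsu (hut.trans t.lt_succ_self)]

theorem trajectory_periodic {N : ℕ} (hN : trajectory f N = f) (hnN : n ∣ N) :
    Periodic (trajectory f) N := by
  intro s
  induction s with
  | zero => rw [zero_add]; exact hN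
  | succ s ih => rw [add_right_comm, trajectory, ih, Fin.natCast_add_of_dvd hnN, trajectory]

theorem trajectory_mod_apply {N : ℕ} (hN : trajectory f N = f) (hnN : n ∣ N) (s : ℕ) :
    trajectory f (s % N) (s % N : ℕ) = trajectory f s s := by
  rw [Fin.natCast_mod_of_dvd hnN, (trajectory_periodic hN hnN).map_mod_nat]

variable (f) in
def IsFrozen (s : ℕ) : Prop :=
  ∀ p ≠ (s : Fin n), trajectory f s p ≠ trajectory f s s

theorem isFrozen_mod_iff {N : ℕ} (hN : trajectory f N = f) (hnN : n ∣ N) (s : ℕ) :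
    IsFrozen f (s % N) ↔ IsFrozen f s := by
  rw [IsFrozen, IsFrozen, Fin.natCast_mod_of_dvd hnN, (trajectory_periodic hN hnN).map_mod_nat]

theorem trajectory_succ_of_isFrozen {s : ℕ} (hs : IsFrozen f s) :
    trajectory f (s + 1) = trajectory f s :=
  step_of_forall_ne hs

theorem trajectory_succ_of_not_isFrozen {s : ℕ} (hs : ¬IsFrozen f s) :
    trajectory f (s + 1) = update (trajectory f s) s (trajectory f s s + 1) :=
  step_of_not_forall_ne hs

theorem trajectory_apply_ne_of_isFrozen {s u : ℕ} (hs : IsFrozen f s) (hsu : s < u)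
    (hu : u < s + n) : trajectory f u u ≠ trajectory f s s := by
  -- the entry whirled at step `u` has not moved since step `s`
  have hunmoved : trajectory f u u = trajectory f (s + 1) u :=
    trajectory_apply_of_forall_ne hsu fun u' hu' hu'u =>
      Fin.natCast_ne_of_lt_of_lt_add hu'u (by omega)
  rw [hunmoved, trajectory_succ_of_isFrozen hs]
  exact hs _ (Fin.natCast_ne_of_lt_of_lt_add hsu hu).symm

theorem add_le_of_isFrozen {s u : ℕ} (hs : IsFrozen f s) (hsu : s < u)
    (hu : trajectory f u u = trajectory f s s) : s + n ≤ u :=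
  not_lt.1 fun hun => trajectory_apply_ne_of_isFrozen hs hsu hun hu

theorem exists_isFrozen_succ (hk : 1 < k) (hf : Surjective f) {s : ℕ} (hs : IsFrozen f s) :
    ∃ u, s < u ∧ u < s + n ∧ trajectory f u u = trajectory f s s + 1 ∧ IsFrozen f u := by
  -- `u` is the step whirling the entry that holds `v + 1` at step `s + n`
  set v := trajectory f s s
  obtain ⟨p, hp⟩ := trajectory_surjective hf (s + n) (v + 1)
  obtain ⟨d, hdn, rfl⟩ := Fin.exists_lt_natCast_add_eq s p
  have hlast : trajectory f (s + n) (s + d : ℕ) = trajectory f (s + d + 1) (s + d : ℕ) :=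
    trajectory_apply_of_forall_ne (by omega) fun u' hu' hu'n =>
      (Fin.natCast_ne_of_lt_of_lt_add (by omega : s + d < u') (by omega)).symm
  have hd : d ≠ 0 := by
    rintro rfl
    rw [hlast, add_zero, trajectory_succ_of_isFrozen hs] at hp
    exact Fin.add_one_ne_self hk v hp.symm
  refine ⟨s + d, by omega, by omega, ?_⟩
  by_cases hfrz : IsFrozen f (s + d)
  · rw [hlast, trajectory_succ_of_isFrozen hfrz] at hp
    exact ⟨hp, hfrz⟩
  · rw [hlast, trajectory_succ_of_not_isFrozen hfrz, update_self, add_left_inj] at hp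
    exact absurd hp (trajectory_apply_ne_of_isFrozen hs (by omega) (by omega))

variable (f) in
def visits (N : ℕ) (v : Fin k) : ℕ := #{s ∈ range N | trajectory f s s = v}

variable (f) in
noncomputable def frozenVisits (N : ℕ) (v : Fin k) : ℕ :=
  #{s ∈ range N | trajectory f s s = v ∧ IsFrozen f s}

variable (f) in
noncomputable def movingVisits (N : ℕ) (v : Fin k) : ℕ :=
  #{s ∈ range N | trajectory f s s = v ∧ ¬IsFrozen f s}

theorem visits_eq_frozenVisits_add_movingVisits (N : ℕ) (v : Fin k) :
    visits f N v = frozenVisits f N v + movingVisits f N v := by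
  rw [visits, frozenVisits, movingVisits, ← filter_filter, ← filter_filter,
    card_filter_add_card_filter_not]

theorem add_le_of_isFrozen_of_isFrozen {N : ℕ} (hN : trajectory f N = f) (hnN : n ∣ N)
    {s s' : ℕ} (hss' : s < s') (hs'N : s' < N) (hs : IsFrozen f s) (hs' : IsFrozen f s')
    (hval : trajectory f s' s' = trajectory f s s) : s + n ≤ s' ∧ s' + n ≤ s + N := by
  have hsN : (s + N) % N = s := by rw [Nat.add_mod_right, Nat.mod_eq_of_lt (by omega)]
  have hvalN := trajectory_mod_apply hN hnN (s + N)
  rw [hsN] at hvalN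
  exact ⟨add_le_of_isFrozen hs hss' hval,
    add_le_of_isFrozen hs' (by omega) (hvalN.symm.trans (hval.symm))⟩

theorem frozenVisits_le_succ (hk : 1 < k) (hf : Surjective f) {N : ℕ} (hN : trajectory f N = f)
    (hnN : n ∣ N) (v : Fin k) : frozenVisits f N v ≤ frozenVisits f N (v + 1) := by
  have hsucc (s : ℕ) (hs : s ∈ {s ∈ range N | trajectory f s s = v ∧ IsFrozen f s}) :
      ∃ u, s < u ∧ u < s + n ∧ trajectory f u u = v + 1 ∧ IsFrozen f u := by
    obtain ⟨-, rfl, hfrz⟩ := mem_filter.1 hs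
    exact exists_isFrozen_succ hk hf hfrz
  choose! next hlt hlt_add hnext hnext_frz using hsucc
  refine card_le_card_of_injOn (next · % N) (fun s hs => ?_) (fun s hs s' hs' h => ?_)
  · have hN0 : 0 < N := by have := mem_range.1 (mem_filter.1 hs).1; omega
    simp only [coe_filter, mem_range, Set.mem_ofPred_eq, trajectory_mod_apply hN hnN,
      isFrozen_mod_iff hN hnN]
    exact ⟨Nat.mod_lt _ hN0, hnext s hs, hnext_frz s hs⟩
  · by_contra hne
    wlog hss' : s < s' generalizing s s'
    · exact this s' hs' s hs h.symm (Ne.symm hne) (by omega)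
    obtain ⟨-, hval, hfrz⟩ := by simpa using hs
    obtain ⟨hs'N, hval', hfrz'⟩ := by simpa using hs'
    obtain ⟨hsep, hsep'⟩ :=
      add_le_of_isFrozen_of_isFrozen hN hnN hss' hs'N hfrz hfrz' (hval'.trans hval.symm)
    have := hlt s hs
    have := hlt_add s hs
    have := hlt s' hs'
    have := hlt_add s' hs'
    exact Nat.not_modEq_of_lt_of_lt_add (m := N) (by omega) (by omega) h

theorem card_fiber_trajectory_succ (s : ℕ) (v : Fin k) :
    #{p | trajectory f (s + 1) p = v + 1} +
        (if trajectory f s s = v + 1 ∧ ¬IsFrozen f s then 1 else 0) =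
      #{p | trajectory f s p = v + 1} +
        (if trajectory f s s = v ∧ ¬IsFrozen f s then 1 else 0) := by
  by_cases hfrz : IsFrozen f s
  · simp [trajectory_succ_of_isFrozen hfrz, hfrz]
  · rw [trajectory_succ_of_not_isFrozen hfrz]
    simpa [hfrz] using card_filter_update_add (trajectory f s) s (trajectory f s s + 1) (v + 1)

theorem movingVisits_succ {N : ℕ} (hN : trajectory f N = f) (v : Fin k) :
    movingVisits f N (v + 1) = movingVisits f N v := by
  set F : ℕ → ℕ := fun s => #{p | trajectory f s p = v + 1}
  have htel := sum_congr rfl fun s (_ : s ∈ range N) => card_fiber_trajectory_succ (f := f) s v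
  rw [sum_add_distrib, sum_add_distrib] at htel
  have hshift : ∑ s ∈ range N, F (s + 1) = ∑ s ∈ range N, F s := by
    have hret : F N = F 0 := by simp only [F, hN]; rfl
    have := sum_range_succ F N
    rw [sum_range_succ', hret] at this
    omega
  simp only [F] at hshift
  rw [movingVisits, movingVisits, card_filter, card_filter]
  omega

theorem visits_le_succ (hf : Surjective f) {N : ℕ} (hN : trajectory f N = f) (hnN : n ∣ N)
    (v : Fin k) : visits f N v ≤ visits f N (v + 1) := by
  obtain rfl | hk := (Nat.one_le_iff_ne_zero.2 (NeZero.ne k)).eq_or_lt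
  · rw [Subsingleton.elim (v + 1) v]
  rw [visits_eq_frozenVisits_add_movingVisits, visits_eq_frozenVisits_add_movingVisits,
    movingVisits_succ hN]
  exact Nat.add_le_add_right (frozenVisits_le_succ hk hf hN hnN v) _

theorem sum_visits (N : ℕ) : ∑ v, visits f N v = N := by
  have := card_eq_sum_card_fiberwise (s := range N) (t := univ)
    (f := fun s => trajectory f s s) fun s _ => mem_coe.2 (mem_univ _)
  rw [card_range] at this
  exact this.symm

theorem card_mul_visits (hf : Surjective f) {N : ℕ} (hN : trajectory f N = f) (hnN : n ∣ N)
    (v : Fin k) : k * visits f N v = N :=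
  calc k * visits f N v = ∑ w, visits f N w := by
        rw [sum_congr rfl fun w _ => Fin.eq_of_forall_le_add_one (visits_le_succ hf hN hnN) w v,
          sum_const, card_univ, Fintype.card_fin, smul_eq_mul]
    _ = N := sum_visits N

theorem visits_mul_eq_sum (f : Fin n → Fin k) (m : ℕ) (v : Fin k) :
    visits f (m * n) v = ∑ t ∈ range m, #{p | trajectory f (t * n) p = v} := by
  induction m with
  | zero => simp [visits]
  | succ m ih =>
    rw [sum_range_succ, ← ih, add_one_mul, visits, visits, card_filter, card_filter,
      sum_range_add, card_filter]
    congr 1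
    rw [← Fin.sum_univ_eq_sum_range
      (fun d => if trajectory f (m * n + d) (m * n + d : ℕ) = v then 1 else 0)]
    refine sum_congr rfl fun d _ => ?_
    rw [trajectory_apply_of_forall_ne (le_add_right le_rfl) fun u hu hud =>
        Fin.natCast_ne_of_lt_of_lt_add hud (by omega),
      add_comm, Fin.natCast_add_of_dvd (dvd_mul_left n m), Fin.cast_val_eq_self]

end Whirl

theorem stmt2_general {n k : ℕ} [NeZero k]
    (f : Fin n → Fin k) (hf : Function.Surjective f) (j : Fin k) :
    (∑ g ∈ orbitOf (whirlAll {h : Fin n → Fin k | Function.Surjective h}) f,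
        ((Finset.univ.filter fun i => g i = j).card : ℚ)) /
      ((orbitOf (whirlAll {h : Fin n → Fin k | Function.Surjective h}) f).card : ℚ)
      = (n : ℚ) / k := by
  have : NeZero n := ⟨(hf 0).choose.pos.ne'⟩
  have hperiodic := Whirl.mem_periodicPts_whirlAll hf
  set m := minimalPeriod (whirlAll {h : Fin n → Fin k | Surjective h}) f
  have hm : 0 < m := minimalPeriod_pos_of_mem_periodicPts hperiodic
  have hret : Whirl.trajectory f (m * n) = f := by
    rw [← Whirl.iterate_whirlAll hf]
    exact isPeriodicPt_minimalPeriod _ f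
  have hsum : ∑ g ∈ orbitOf (whirlAll {h : Fin n → Fin k | Surjective h}) f,
      (#{i | g i = j} : ℚ) = Whirl.visits f (m * n) j := by
    simp_rw [sum_orbitOf hperiodic, Whirl.iterate_whirlAll hf, Whirl.visits_mul_eq_sum]
    push_cast
    rfl
  have hvisits := Whirl.card_mul_visits hf hret (dvd_mul_left n m) j
  rw [hsum, card_orbitOf hperiodic, div_eq_div_iff (by exact_mod_cast hm.ne')
    (by exact_mod_cast NeZero.ne k)]
  exact_mod_cast (by linarith : Whirl.visits f (m * n) j * k = n * m)

theorem stmt2 {n k : ℕ} [NeZero k] (hkn : k ≤ n)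
    (f : Fin n → Fin k) (hf : Function.Surjective f) (j : Fin k) :
    (∑ g ∈ orbitOf (whirlAll {h : Fin n → Fin k | Function.Surjective h}) f,
        ((Finset.univ.filter fun i => g i = j).card : ℚ)) /
      ((orbitOf (whirlAll {h : Fin n → Fin k | Function.Surjective h}) f).card : ℚ)
      = (n : ℚ) / k :=
  stmt2_general f hf j
end

section
/- Let F = Sur_1(n,k) with w_i either adding 1 mod k to f(i) or fixing f(i). If f ∈ Sur_1(n,k) and f(j) = i, and i does not occur among the values (w_{j-1}∘⋯∘w_1 f)(j+1), ..., (w_{j-1}∘⋯∘w_1 f)(n), f(1)', ..., f(j-1)' read after partial whirling (equivalently, i occurs exactly once as an output of w_{j-1}∘⋯∘w_1(f)), then (w_j∘⋯∘w_1 f)(j) = i; otherwise (w_j∘⋯∘w_1 f)(j) = i+1 mod k. -/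
/-!
Whirling at an index changes only that entry, so after `w_{j-1} ∘ ⋯ ∘ w_1` the `j`-th entry is
still `f j = i`. Raising it to `i + 1` keeps the map surjective exactly when `i` is also taken
elsewhere; when `j` is the only preimage of `i`, every surjective update at `j` must put `i` back,
so `w_j` fixes the entry.
-/

open Finset

open scoped Classical

/-- The partial whirl $w_t ∘ ⋯ ∘ w_1$ (whirling at the first `t` indices, left to right). -/
noncomputable def whirlUpTo {n k : ℕ} [NeZero k] (F : Set (Fin n → Fin k))
    (f : Fin n → Fin k) (t : ℕ) : Fin n → Fin k :=
  ((List.finRange n).take t).foldl (fun g i => whirl F i g) f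

open Fin.NatCast

section Whirl

variable {n k : ℕ} [NeZero k] (F : Set (Fin n → Fin k))

theorem whirl_apply_of_ne {a j : Fin n} (hne : a ≠ j) (g : Fin n → Fin k) :
    whirl F a g j = g j := by
  unfold whirl
  split
  · exact Function.update_of_ne hne.symm _ g
  · rfl

theorem foldl_whirl_apply_of_not_mem {l : List (Fin n)} {j : Fin n} (hj : j ∉ l)
    (g : Fin n → Fin k) : l.foldl (fun g i => whirl F i g) g j = g j := by
  induction l generalizing g with
  | nil => rfl
  | cons a l ih =>
    rw [List.mem_cons, not_or] at hj
    rw [List.foldl_cons, ih hj.2, whirl_apply_of_ne F (Ne.symm hj.1)]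

theorem whirl_mem {g : Fin n → Fin k} (hg : g ∈ F) (a : Fin n) : whirl F a g ∈ F := by
  unfold whirl
  split
  · next h => exact (Nat.find_spec h).2
  · exact hg

theorem whirlUpTo_mem {f : Fin n → Fin k} (hf : f ∈ F) (t : ℕ) : whirlUpTo F f t ∈ F := by
  unfold whirlUpTo
  induction (List.finRange n).take t generalizing f with
  | nil => exact hf
  | cons a l ih => exact ih (whirl_mem F hf a)

theorem whirlUpTo_succ (f : Fin n → Fin k) (j : Fin n) :
    whirlUpTo F f (j.val + 1) = whirl F j (whirlUpTo F f j.val) := by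
  unfold whirlUpTo
  rw [List.take_add_one, List.getElem?_eq_getElem (by simp), List.getElem_finRange,
    Option.toList_some, List.foldl_append]
  rfl

theorem whirlUpTo_apply_self (f : Fin n → Fin k) (j : Fin n) :
    whirlUpTo F f j.val j = f j := by
  refine foldl_whirl_apply_of_not_mem F (fun hmem => ?_) f
  obtain ⟨t, ht, hval⟩ := List.mem_take_iff_getElem.mp hmem
  rw [List.getElem_finRange] at hval
  have := congrArg Fin.val hval
  simp only [Fin.val_cast] at this
  omega

theorem whirl_apply_self_of_forall_update_mem {a : Fin n} {g : Fin n → Fin k}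
    (h : ∀ v, Function.update g a v ∈ F → v = g a) : whirl F a g a = g a := by
  unfold whirl
  split
  · next hex => rw [Function.update_self]; exact h _ (Nat.find_spec hex).2
  · rfl

theorem whirl_apply_self_of_update_add_one_mem {a : Fin n} {g : Fin n → Fin k}
    (h : Function.update g a (g a + 1) ∈ F) : whirl F a g a = g a + 1 := by
  have hex : ∃ t : ℕ, 0 < t ∧ Function.update g a (g a + (t : Fin k)) ∈ F :=
    ⟨1, one_pos, by rwa [Nat.cast_one]⟩
  have hfind : Nat.find hex = 1 :=
    le_antisymm (Nat.find_le ⟨one_pos, by rwa [Nat.cast_one]⟩) (Nat.find_spec hex).1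
  rw [whirl, dif_pos hex, Function.update_self, hfind, Nat.cast_one]

end Whirl

section Surjective

variable {n k : ℕ} {g : Fin n → Fin k} {a : Fin n}

theorem eq_of_update_surjective (huniq : ∀ x, g x = g a → x = a) {v : Fin k}
    (hv : Function.Surjective (Function.update g a v)) : v = g a := by
  obtain ⟨x, hx⟩ := hv (g a)
  by_cases hxa : x = a
  · rwa [hxa, Function.update_self] at hx
  · rw [Function.update_of_ne hxa] at hx
    exact absurd (huniq x hx) hxa

theorem update_surjective_of_apply_eq (hg : Function.Surjective g) {x : Fin n} (hxa : x ≠ a)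
    (hx : g x = g a) (v : Fin k) : Function.Surjective (Function.update g a v) := by
  intro u
  obtain ⟨y, rfl⟩ := hg u
  by_cases hya : y = a
  · exact ⟨x, by rw [Function.update_of_ne hxa, hx, hya]⟩
  · exact ⟨y, Function.update_of_ne hya v g⟩

theorem whirl_surjective_apply_self [NeZero k] (hg : Function.Surjective g) :
    whirl {h : Fin n → Fin k | Function.Surjective h} a g a =
      if (univ.filter fun x => g x = g a).card = 1 then g a else g a + 1 := by
  have ha : a ∈ univ.filter fun x => g x = g a := by simp
  split_ifs with hcard
  · have huniq : ∀ x, g x = g a → x = a := fun x hx =>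
      card_le_one.mp hcard.le x (mem_filter.mpr ⟨mem_univ x, hx⟩) a ha
    exact whirl_apply_self_of_forall_update_mem _ fun v hv => eq_of_update_surjective huniq hv
  · have hlt : 1 < (univ.filter fun x => g x = g a).card :=
      lt_of_le_of_ne (card_pos.mpr ⟨a, ha⟩) (Ne.symm hcard)
    obtain ⟨x, hx, hxa⟩ := exists_mem_ne hlt a
    exact whirl_apply_self_of_update_add_one_mem _
      (update_surjective_of_apply_eq hg hxa (mem_filter.mp hx).2 _)

end Surjective

theorem stmt4_general {n k : ℕ} [NeZero k]
    (f : Fin n → Fin k) (hf : Function.Surjective f) (j : Fin n) (i : Fin k)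
    (hfj : f j = i) :
    ((Finset.univ.filter fun x =>
          whirlUpTo {h : Fin n → Fin k | Function.Surjective h} f j.val x = i).card = 1 →
        whirlUpTo {h : Fin n → Fin k | Function.Surjective h} f (j.val + 1) j = i) ∧
    ((Finset.univ.filter fun x =>
          whirlUpTo {h : Fin n → Fin k | Function.Surjective h} f j.val x = i).card ≠ 1 →
        whirlUpTo {h : Fin n → Fin k | Function.Surjective h} f (j.val + 1) j = i + 1) := by
  set F : Set (Fin n → Fin k) := {h | Function.Surjective h}
  have hgj : whirlUpTo F f j.val j = i := (whirlUpTo_apply_self F f j).trans hfj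
  have hstep := whirl_surjective_apply_self (a := j) (whirlUpTo_mem F hf j.val)
  rw [hgj, ← whirlUpTo_succ F f j] at hstep
  exact ⟨fun h => by rw [hstep, if_pos h], fun h => by rw [hstep, if_neg h]⟩

theorem stmt4 {n k : ℕ} [NeZero k] (hkn : k ≤ n)
    (f : Fin n → Fin k) (hf : Function.Surjective f) (j : Fin n) (i : Fin k)
    (hfj : f j = i) :
    ((Finset.univ.filter fun x =>
          whirlUpTo {h : Fin n → Fin k | Function.Surjective h} f j.val x = i).card = 1 →
        whirlUpTo {h : Fin n → Fin k | Function.Surjective h} f (j.val + 1) j = i) ∧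
    ((Finset.univ.filter fun x =>
          whirlUpTo {h : Fin n → Fin k | Function.Surjective h} f j.val x = i).card ≠ 1 →
        whirlUpTo {h : Fin n → Fin k | Function.Surjective h} f (j.val + 1) j = i + 1) :=
  stmt4_general f hf j i hfj
end

section
/- The map f ↦ f̄, where f̄(i) = f(i) + i − 1, is a bijection from OP(n,k) (weakly increasing maps [n] → [k]) to OP_inj(n,k+n−1) (strictly increasing maps [n] → [k+n−1]), and it intertwines the whirl maps: for every i ∈ [n] and f ∈ OP(n,k), the strict-whirl W_i applied to f̄ equals the image under the bijection of the weak-whirl w_i applied to f. -/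
open Finset

open scoped Classical

/-- Weakly increasing (order-preserving) maps. -/
def OP (n k : ℕ) : Set (Fin n → Fin k) := {f | Monotone f}

/-- Strictly increasing maps. -/
def OPinj (n k : ℕ) : Set (Fin n → Fin k) := {f | StrictMono f}

/-- The map $f ↦ \bar f$, $\bar f(i) = f(i) + i - 1$ (0-indexed: $\bar f(i) = f(i) + i$). -/
def opBar {n k : ℕ} (f : Fin n → Fin k) : Fin n → Fin (k + n - 1) := fun i =>
  ⟨(f i).val + i.val, by have h1 := (f i).isLt; have h2 := i.isLt; omega⟩

/-! The bar map sends `f` to `j ↦ f j + j`, so adjacent inequalities `f j ≤ f (j + 1)` become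
`f̄ j < f̄ (j + 1)`; this gives the bijection. A whirl at `i` moves `f i` to the first admissible
value met when stepping cyclically upward from `f i`. The admissible values of `f̄` at `i` are
exactly the images of those of `f` under the strictly monotone map `v ↦ v + i`, and a strictly
monotone map preserves the cyclic order of the values it hits, hence the first admissible value. -/

open Fin.NatCast

section CyclicKey

variable {k : ℕ}

/-- Position of `v` in the cyclic order on `Fin k` that starts just after `a`. -/
def cycKey (a v : Fin k) : Bool ×ₗ Fin k := toLex (decide (v ≤ a), v)

lemma cycKey_injective (a : Fin k) : Function.Injective (cycKey a) := fun _ _ h =>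
  congrArg (fun p => (ofLex p).2) h

lemma cycKey_le_cycKey_iff_of_strictMono {K : ℕ} {e : Fin k → Fin K} (he : StrictMono e)
    (a v w : Fin k) : cycKey (e a) (e v) ≤ cycKey (e a) (e w) ↔ cycKey a v ≤ cycKey a w := by
  simp only [cycKey, Prod.Lex.toLex_le_toLex, he.le_iff_le]

variable [NeZero k]

lemma cycKey_add_le_add (a : Fin k) {t t' : ℕ} (ht : 0 < t) (htt' : t ≤ t') (ht' : t' ≤ k) :
    cycKey a (a + t) ≤ cycKey a (a + t') := by
  have ha := a.isLt
  simp only [cycKey, Prod.Lex.toLex_le_toLex, Fin.le_def, Fin.val_add, Fin.val_natCast,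
    Nat.add_mod_mod]
  have hmod : ∀ s, 0 < s → s ≤ k →
      (a.val + s) % k = if a.val + s < k then a.val + s else a.val + s - k := by
    intro s hs hsk
    split_ifs with h
    · exact Nat.mod_eq_of_lt h
    · rw [Nat.mod_eq_sub_mod (by omega), Nat.mod_eq_of_lt (by omega)]
  rw [hmod t ht (by omega), hmod t' (by omega) ht']
  split_ifs
  · right; simp; omega
  · left; simp [ht.ne', ht']
  · omega
  · right; simp; omega

lemma exists_add_eq (a v : Fin k) : ∃ t, 0 < t ∧ t ≤ k ∧ a + (t : Fin k) = v :=
  ⟨(v - a - 1 : Fin k).val + 1, by omega, (v - a - 1).isLt, by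
    rw [Nat.cast_add, Nat.cast_one, Fin.cast_val_eq_self]; abel⟩

lemma cycKey_add_find_le {A : Set (Fin k)} (a : Fin k)
    (h : ∃ t : ℕ, 0 < t ∧ a + (t : Fin k) ∈ A) {v : Fin k} (hv : v ∈ A) :
    cycKey a (a + Nat.find h) ≤ cycKey a v := by
  obtain ⟨t, ht, htk, rfl⟩ := exists_add_eq a v
  exact cycKey_add_le_add a (Nat.find_spec h).1 (Nat.find_min' h ⟨ht, hv⟩) htk

/-- `a + Nat.find hA` is the first element of `A` met when stepping cyclically upward
from `a`. -/
lemma StrictMono.map_add_find {K : ℕ} [NeZero K] {e : Fin k → Fin K} (he : StrictMono e)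
    {A : Set (Fin k)} {B : Set (Fin K)} (hB : ∀ w, w ∈ B ↔ ∃ v ∈ A, e v = w) {a : Fin k}
    {c : Fin K} (hc : e a = c) (hA : ∃ t : ℕ, 0 < t ∧ a + (t : Fin k) ∈ A)
    (hB' : ∃ s : ℕ, 0 < s ∧ c + (s : Fin K) ∈ B) :
    e (a + Nat.find hA) = c + Nat.find hB' := by
  subst hc
  obtain ⟨v, hv, hve⟩ := (hB _).1 (Nat.find_spec hB').2
  rw [← hve]
  refine congrArg e (cycKey_injective a (le_antisymm (cycKey_add_find_le a hA hv) ?_))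
  rw [← cycKey_le_cycKey_iff_of_strictMono he, hve]
  exact cycKey_add_find_le (e a) hB' ((hB _).2 ⟨_, (Nat.find_spec hA).2, rfl⟩)

end CyclicKey

open Function in
theorem map_whirl {n k K : ℕ} [NeZero k] [NeZero K] {F : Set (Fin n → Fin k)}
    {G : Set (Fin n → Fin K)} {Φ : (Fin n → Fin k) → Fin n → Fin K} {e : Fin k → Fin K}
    (he : StrictMono e) {i : Fin n} {f : Fin n → Fin k} (hf : f ∈ F)
    (hΦ : ∀ v, Φ (update f i v) = update (Φ f) i (e v))
    (hG : ∀ w, update (Φ f) i w ∈ G ↔ ∃ v, update f i v ∈ F ∧ e v = w) :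
    Φ (whirl F i f) = whirl G i (Φ f) := by
  have hΦi : e (f i) = Φ f i := by simpa using (congrFun (hΦ (f i)) i).symm
  have hP : ∃ t : ℕ, 0 < t ∧ update f i (f i + (t : Fin k)) ∈ F :=
    ⟨k, NeZero.pos k, by simpa using hf⟩
  have hQ : ∃ s : ℕ, 0 < s ∧ update (Φ f) i (Φ f i + (s : Fin K)) ∈ G :=
    ⟨K, NeZero.pos K, by simpa using (hG (Φ f i)).2 ⟨f i, by simpa using hf, hΦi⟩⟩
  rw [whirl, whirl, dif_pos hP, dif_pos hQ, hΦ]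
  exact congrArg _ (he.map_add_find (A := {v | update f i v ∈ F}) hG hΦi hP hQ)

section OpBar

variable {n k : ℕ}

lemma Fin.val_eq_add_one_of_covBy {a b : Fin n} (h : a ⋖ b) : b.val = a.val + 1 := by
  by_contra hne
  have hab : a.val < b.val := h.lt
  exact h.2 (c := ⟨a.val + 1, by omega⟩) (Fin.lt_def.2 (by simp))
    (Fin.lt_def.2 (show a.val + 1 < b.val by omega))

lemma strictMono_opBar_iff {f : Fin n → Fin k} : StrictMono (opBar f) ↔ Monotone f := by
  rw [strictMono_iff_forall_covBy, monotone_iff_forall_covBy]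
  refine forall₂_congr fun a b => imp_congr_right fun hab => ?_
  have := Fin.val_eq_add_one_of_covBy hab
  simp only [Fin.lt_def, Fin.le_def, opBar]
  omega

lemma StrictMono.monotone_val_sub {K : ℕ} {g : Fin n → Fin K} (hg : StrictMono g) :
    Monotone fun j => ((g j : ℕ) : ℤ) - j := by
  rw [monotone_iff_forall_covBy]
  intro a b hab
  have := Fin.val_eq_add_one_of_covBy hab
  have := Fin.lt_def.1 (hg hab.lt)
  omega

lemma exists_opBar_eq {g : Fin n → Fin (k + n - 1)} (hg : StrictMono g) :
    ∃ f : Fin n → Fin k, opBar f = g := by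
  have hbound : ∀ j : Fin n, j.val ≤ (g j).val ∧ (g j).val - j.val < k := by
    intro j
    have hj := j.isLt
    have hfirst : ((g ⟨0, by omega⟩ : ℕ) : ℤ) - 0 ≤ (g j : ℕ) - j.val :=
      hg.monotone_val_sub (Fin.le_def.2 (Nat.zero_le j.val))
    have hlast : ((g j : ℕ) : ℤ) - j.val ≤ (g ⟨n - 1, by omega⟩ : ℕ) - (n - 1 : ℕ) :=
      hg.monotone_val_sub (Fin.le_def.2 (by simp only; omega))
    have := (g ⟨n - 1, by omega⟩).isLt
    omega
  exact ⟨fun j => ⟨(g j).val - j.val, (hbound j).2⟩,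
    funext fun j => Fin.ext (by have := (hbound j).1; simp only [opBar]; omega)⟩

lemma opBar_injective :
    Function.Injective (opBar : (Fin n → Fin k) → Fin n → Fin (k + n - 1)) :=
  fun _ _ h => funext fun j => Fin.ext (Nat.add_right_cancel (congrArg Fin.val (congrFun h j)))

theorem bijOn_opBar : Set.BijOn opBar (OP n k) (OPinj n (k + n - 1)) :=
  ⟨fun _ hf => strictMono_opBar_iff.2 hf, opBar_injective.injOn, fun _ hg =>
    let ⟨f, hf⟩ := exists_opBar_eq hg
    ⟨f, strictMono_opBar_iff.1 (hf ▸ hg), hf⟩⟩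

def opBarAt (i : Fin n) (v : Fin k) : Fin (k + n - 1) :=
  ⟨v.val + i.val, by have := v.isLt; have := i.isLt; omega⟩

lemma strictMono_opBarAt (i : Fin n) : StrictMono (opBarAt (k := k) i) :=
  fun _ _ h => Nat.add_lt_add_right h _

open Function

lemma opBar_update (f : Fin n → Fin k) (i : Fin n) (v : Fin k) :
    opBar (update f i v) = update (opBar f) i (opBarAt i v) :=
  funext (apply_update (fun j => opBarAt j) f i v)

lemma update_opBar_mem_OPinj_iff {f : Fin n → Fin k} {i : Fin n} {w : Fin (k + n - 1)} :
    update (opBar f) i w ∈ OPinj n (k + n - 1) ↔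
      ∃ v, update f i v ∈ OP n k ∧ opBarAt i v = w := by
  constructor
  · intro hw
    obtain ⟨h, hh⟩ := exists_opBar_eq hw
    have hhi : opBarAt i (h i) = w := by
      rw [← update_self i w (opBar f), ← hh]; rfl
    have hupd : update f i (h i) = h := opBar_injective (by rw [opBar_update, hhi, hh])
    refine ⟨h i, ?_, hhi⟩
    rw [hupd]
    exact strictMono_opBar_iff.1 (by rw [hh]; exact hw)
  · rintro ⟨v, hv, rfl⟩
    rw [← opBar_update]
    exact strictMono_opBar_iff.2 hv

end OpBar

theorem stmt18_general {n k : ℕ} [NeZero k] [NeZero (k + n - 1)] :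
    Set.BijOn (opBar : (Fin n → Fin k) → (Fin n → Fin (k + n - 1))) (OP n k)
      (OPinj n (k + n - 1)) ∧
    ∀ i : Fin n, ∀ f ∈ OP n k,
      opBar (whirl (OP n k) i f) = whirl (OPinj n (k + n - 1)) i (opBar f) :=
  ⟨bijOn_opBar, fun i _ hf =>
    map_whirl (strictMono_opBarAt i) hf (opBar_update _ i) fun _ => update_opBar_mem_OPinj_iff⟩

theorem stmt18 {n k : ℕ} [NeZero k] [NeZero (k + n - 1)] (hn : 1 ≤ n) :
    Set.BijOn (opBar : (Fin n → Fin k) → (Fin n → Fin (k + n - 1))) (OP n k)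
      (OPinj n (k + n - 1)) ∧
    ∀ i : Fin n, ∀ f ∈ OP n k,
      opBar (whirl (OP n k) i f) = whirl (OPinj n (k + n - 1)) i (opBar f) :=
  stmt18_general
end
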